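/- If (M →^∂ N, ·, {−,−}) is a braided crossed module of Lie K-algebras, then the map ⦃−,−⦄ : (N ⊗ N) × (N ⊗ N) → N ⊗ M defined on generators by ⦃n ⊗ n', n'' ⊗ n'''⦄ = [n,n'] ⊗ {n'',n'''} is a braiding on the crossed module (N ⊗ M →^{Id_N ⊗ ∂} N ⊗ N, *), where (n ⊗ n')*(n'' ⊗ m) = [[n,n'],n''] ⊗ m + n'' ⊗ ([n,n']·m). -/

import Mathlib

/-!
By `BLie5`, `BLie6` and (through the Peiffer identity) `BLie1`, `BLie4`, the braiding `{−,−}`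
satisfies the defining relations of `N ⊗ N`, so it induces a Lie homomorphism `β : N ⊗ N → M`, and
the new braiding is `⦃x, y⦄ = ∂(β x) ⊗ β y`. Since `∂ ∘ β` is the commutator map `N ⊗ N → N` and
`β ∘ (Id ⊗ ∂)` is `n ⊗ m ↦ n · m`, checking on generators rewrites the brackets of `N ⊗ N` and
`N ⊗ M` and the action `*` in terms of these two maps, which gives `BLie1`–`BLie4`; `BLie5` and
`BLie6` are the defining relations of `N ⊗ M` applied to `∂(β x)` and `β y`.
-/

universe u

/-- The Lie bracket as a bilinear map. -/
def bracketMap (K : Type u) [CommRing K] (M : Type u) [LieRing M] [LieAlgebra K M] :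
    M →ₗ[K] M →ₗ[K] M :=
  LinearMap.mk₂ K (fun a b => ⁅a, b⁆) add_lie smul_lie lie_add lie_smul

/-- Axioms for a crossed module of Lie `K`-algebras `(d : M → N, act)`. -/
structure LieXMod (K : Type u) [CommRing K] (M N : Type u)
    [LieRing M] [LieAlgebra K M] [LieRing N] [LieAlgebra K N]
    (d : M →ₗ⁅K⁆ N) (act : N →ₗ[K] M →ₗ[K] M) : Prop where
  act_lie : ∀ n n' m, act ⁅n, n'⁆ m = act n (act n' m) - act n' (act n m)
  lie_act : ∀ n m m', act n ⁅m, m'⁆ = ⁅act n m, m'⁆ + ⁅m, act n m'⁆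
  equivar : ∀ n m, d (act n m) = ⁅n, d m⁆
  peiffer : ∀ m m', act (d m) m' = ⁅m, m'⁆

/-- Axioms `BLie1`–`BLie6` for a braiding on a crossed module of Lie algebras. -/
structure LieBraiding (K : Type u) [CommRing K] (M N : Type u)
    [LieRing M] [LieAlgebra K M] [LieRing N] [LieAlgebra K N]
    (d : M →ₗ⁅K⁆ N) (act : N →ₗ[K] M →ₗ[K] M)
    (br : N →ₗ[K] N →ₗ[K] M) : Prop where
  b1 : ∀ n n', d (br n n') = ⁅n, n'⁆
  b2 : ∀ m m', br (d m) (d m') = ⁅m, m'⁆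
  b3 : ∀ m n, br (d m) n = - act n m
  b4 : ∀ n m, br n (d m) = act n m
  b5 : ∀ n n' n'', br n ⁅n', n''⁆ = br ⁅n, n'⁆ n'' - br ⁅n, n''⁆ n'
  b6 : ∀ n n' n'', br ⁅n, n'⁆ n'' = br n ⁅n', n''⁆ - br n' ⁅n, n''⁆

/-- `T`, together with the bilinear pairing `t`, is the non-abelian tensor product
of the Lie algebras `A` and `B` acting on each other via `actAB` and `actBA`:
it satisfies the defining relations of the presentation and the universal property. -/
structure IsNATensor (K : Type u) [CommRing K] (A B : Type u)
    [LieRing A] [LieAlgebra K A] [LieRing B] [LieAlgebra K B]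
    (actAB : A →ₗ[K] B →ₗ[K] B) (actBA : B →ₗ[K] A →ₗ[K] A)
    (T : Type u) [LieRing T] [LieAlgebra K T]
    (t : A →ₗ[K] B →ₗ[K] T) : Prop where
  rel3a : ∀ a a' b, t ⁅a, a'⁆ b = t a (actAB a' b) - t a' (actAB a b)
  rel3b : ∀ a b b', t a ⁅b, b'⁆ = t (actBA b' a) b - t (actBA b a) b'
  rel4 : ∀ a b a' b', ⁅t a b, t a' b'⁆ = - t (actBA b a) (actAB a' b')
  lift : ∀ (C : Type u) [LieRing C] [LieAlgebra K C] (f : A →ₗ[K] B →ₗ[K] C),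
      (∀ a a' b, f ⁅a, a'⁆ b = f a (actAB a' b) - f a' (actAB a b)) →
      (∀ a b b', f a ⁅b, b'⁆ = f (actBA b' a) b - f (actBA b a) b') →
      (∀ a b a' b', ⁅f a b, f a' b'⁆ = - f (actBA b a) (actAB a' b')) →
      ∃! φ : T →ₗ⁅K⁆ C, ∀ a b, φ (t a b) = f a b

/-- `T` with pairing `t` is the non-abelian tensor square of `N` (adjoint actions). -/
def IsNATensorSq (K : Type u) [CommRing K] (N : Type u) [LieRing N] [LieAlgebra K N]
    (T : Type u) [LieRing T] [LieAlgebra K T] (t : N →ₗ[K] N →ₗ[K] T) : Prop :=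
  IsNATensor K N N (bracketMap K N) (bracketMap K N) T t

/-- The action `m ⋆ n = ⁅∂ m, n⁆` of `M` on `N` induced by the boundary map. -/
def coAct (K : Type u) [CommRing K] (M N : Type u) [LieRing M] [LieAlgebra K M]
    [LieRing N] [LieAlgebra K N] (d : M →ₗ⁅K⁆ N) : M →ₗ[K] N →ₗ[K] N :=
  LinearMap.mk₂ K (fun m n => ⁅(d m : N), n⁆)
    (fun m m' n => by simp [add_lie]) (fun c m n => by simp [smul_lie])
    (fun m n n' => by simp [lie_add]) (fun c m n => by simp [lie_smul])


@[simp]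
theorem bracketMap_apply (K : Type u) [CommRing K] {L : Type u} [LieRing L] [LieAlgebra K L]
    (a b : L) : bracketMap K L a b = ⁅a, b⁆ :=
  rfl

@[simp]
theorem coAct_apply (K : Type u) [CommRing K] {M N : Type u} [LieRing M] [LieAlgebra K M]
    [LieRing N] [LieAlgebra K N] (d : M →ₗ⁅K⁆ N) (m : M) (n : N) :
    coAct K M N d m n = ⁅d m, n⁆ :=
  rfl

namespace IsNATensor

variable {K : Type u} [CommRing K] {A B : Type u} [LieRing A] [LieAlgebra K A]
  [LieRing B] [LieAlgebra K B] {actAB : A →ₗ[K] B →ₗ[K] B} {actBA : B →ₗ[K] A →ₗ[K] A}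
  {T : Type u} [LieRing T] [LieAlgebra K T] {t : A →ₗ[K] B →ₗ[K] T}

theorem lieHom_ext (hT : IsNATensor K A B actAB actBA T t) {C : Type u} [LieRing C]
    [LieAlgebra K C] {φ₁ φ₂ : T →ₗ⁅K⁆ C} (h : ∀ a b, φ₁ (t a b) = φ₂ (t a b)) : φ₁ = φ₂ := by
  obtain ⟨_, -, huniq⟩ := hT.lift C (t.compr₂ φ₁.toLinearMap)
    (fun a a' b => by simp [hT.rel3a]) (fun a b b' => by simp [hT.rel3b])
    (fun a b a' b' => by simp [← LieHom.map_lie, hT.rel4])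
  exact (huniq φ₁ fun _ _ => rfl).trans (huniq φ₂ fun a b => (h a b).symm).symm

/-- By `rel4` the span of the generators is a Lie subalgebra, and the universal property
splits its inclusion. -/
theorem mem_span_tmul (hT : IsNATensor K A B actAB actBA T t) (x : T) :
    x ∈ Submodule.span K {z | ∃ a b, t a b = z} := by
  set S := Submodule.span K {z | ∃ a b, t a b = z}
  have hgen : ∀ a b, t a b ∈ S := fun a b => Submodule.subset_span ⟨a, b, rfl⟩
  have lie_mem : ∀ {x y}, x ∈ S → y ∈ S → ⁅x, y⁆ ∈ S := by
    intro x y hx hy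
    induction hx, hy using Submodule.span_induction₂ with
    | mem_mem x y hx hy =>
      obtain ⟨a, b, rfl⟩ := hx
      obtain ⟨a', b', rfl⟩ := hy
      rw [hT.rel4]
      exact neg_mem (hgen _ _)
    | zero_left => simp
    | zero_right => simp
    | add_left _ _ _ _ _ _ h₁ h₂ => rw [add_lie]; exact add_mem h₁ h₂
    | add_right _ _ _ _ _ _ h₁ h₂ => rw [lie_add]; exact add_mem h₁ h₂
    | smul_left _ _ _ _ _ h => rw [smul_lie]; exact S.smul_mem _ h
    | smul_right _ _ _ _ _ h => rw [lie_smul]; exact S.smul_mem _ h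
  let L : LieSubalgebra K T := { S with lie_mem' := lie_mem }
  let f : A →ₗ[K] B →ₗ[K] L :=
    LinearMap.mk₂ K (fun a b => ⟨t a b, hgen a b⟩)
      (fun a a' b => Subtype.ext (by simp)) (fun c a b => Subtype.ext (by simp))
      (fun a b b' => Subtype.ext (by simp)) (fun c a b => Subtype.ext (by simp))
  obtain ⟨φ, hφ, -⟩ := hT.lift L f
    (fun a a' b => Subtype.ext (by simpa [f] using hT.rel3a a a' b))
    (fun a b b' => Subtype.ext (by simpa [f] using hT.rel3b a b b'))
    (fun a b a' b' => Subtype.ext (by simpa [f] using hT.rel4 a b a' b'))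
  have hid : L.incl.comp φ = LieHom.id := hT.lieHom_ext fun a b => by simp [hφ, f]
  rw [← LieHom.id_apply (R := K) x, ← hid]
  exact (φ x).2

theorem linearMap_ext (hT : IsNATensor K A B actAB actBA T t) {P : Type*} [AddCommGroup P]
    [Module K P] {g₁ g₂ : T →ₗ[K] P} (h : ∀ a b, g₁ (t a b) = g₂ (t a b)) : g₁ = g₂ := by
  ext x
  induction hT.mem_span_tmul x using Submodule.span_induction with
  | mem _ hx => obtain ⟨a, b, rfl⟩ := hx; exact h a b
  | zero => simp
  | add _ _ _ _ h₁ h₂ => simp [h₁, h₂]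
  | smul _ _ _ h => simp [h]

theorem linearMap_ext₂ (hT : IsNATensor K A B actAB actBA T t) {A' B' : Type u} [LieRing A']
    [LieAlgebra K A'] [LieRing B'] [LieAlgebra K B'] {actAB' : A' →ₗ[K] B' →ₗ[K] B'}
    {actBA' : B' →ₗ[K] A' →ₗ[K] A'} {T' : Type u} [LieRing T'] [LieAlgebra K T']
    {t' : A' →ₗ[K] B' →ₗ[K] T'} (hT' : IsNATensor K A' B' actAB' actBA' T' t') {P : Type*}
    [AddCommGroup P] [Module K P] {g₁ g₂ : T →ₗ[K] T' →ₗ[K] P}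
    (h : ∀ a b a' b', g₁ (t a b) (t' a' b') = g₂ (t a b) (t' a' b')) : g₁ = g₂ :=
  hT.linearMap_ext fun a b => hT'.linearMap_ext fun a' b' => h a b a' b'

end IsNATensor

section CrossedModule

variable {K : Type u} [CommRing K] {M N : Type u} [LieRing M] [LieAlgebra K M]
  [LieRing N] [LieAlgebra K N] {d : M →ₗ⁅K⁆ N} {act : N →ₗ[K] M →ₗ[K] M}
  {TM : Type u} [LieRing TM] [LieAlgebra K TM] {tm : N →ₗ[K] M →ₗ[K] TM}
  {TN : Type u} [LieRing TN] [LieAlgebra K TN] {tn : N →ₗ[K] N →ₗ[K] TN}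

theorem IsNATensorSq.lie_eq_tmul (hTN : IsNATensorSq K N TN tn) {κ : TN →ₗ[K] N}
    (hκ : ∀ a b, κ (tn a b) = ⁅a, b⁆) (x y : TN) : ⁅x, y⁆ = tn (κ x) (κ y) := by
  have : bracketMap K TN = (tn ∘ₗ κ).compl₂ κ :=
    IsNATensor.linearMap_ext₂ hTN hTN fun a b a' b' => by
      simp [IsNATensor.rel4 hTN, hκ, ← lie_skew a b, -lie_skew]
  exact LinearMap.congr_fun₂ this x y

theorem LieBraiding.exists_lieHom_tensorSq {br : N →ₗ[K] N →ₗ[K] M}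
    (hB : LieBraiding K M N d act br) (hX : LieXMod K M N d act)
    (hTN : IsNATensorSq K N TN tn) : ∃ β : TN →ₗ⁅K⁆ M, ∀ a b, β (tn a b) = br a b := by
  obtain ⟨β, hβ, -⟩ := IsNATensor.lift hTN M br
    (fun a a' b => by simpa using hB.b6 a a' b)
    (fun a b b' => by simp [hB.b5, ← lie_skew b' a, ← lie_skew b a, -lie_skew, neg_add_eq_sub])
    (fun a b a' b' => by simp [← hX.peiffer, hB.b1, ← hB.b4, ← lie_skew b a, -lie_skew])
  exact ⟨β, hβ⟩

namespace IsNATensor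

theorem tmul_lie_right (hTM : IsNATensor K N M act (coAct K M N d) TM tm) (n : N) (m m' : M) :
    tm n ⁅m, m'⁆ = tm ⁅n, d m⁆ m' - tm ⁅n, d m'⁆ m := by
  rw [hTM.rel3b, coAct_apply, coAct_apply, ← lie_skew (d m') n, ← lie_skew (d m) n, map_neg,
    map_neg, LinearMap.neg_apply, LinearMap.neg_apply]
  abel

theorem tmul_lie_boundary_boundary (hTM : IsNATensor K N M act (coAct K M N d) TM tm)
    (hX : LieXMod K M N d act) (a b c : M) :
    tm ⁅d a, d b⁆ c = tm (d a) ⁅b, c⁆ - tm (d b) ⁅a, c⁆ := by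
  rw [hTM.rel3a, hX.peiffer, hX.peiffer]

/-- Expanding both terms of `tmul_lie_right` by `rel3a` and the Peiffer identity gives
`tm n ⁅m, p⁆` back with coefficient `2`, so it can be solved for. -/
theorem tmul_lie_eq_sub (hTM : IsNATensor K N M act (coAct K M N d) TM tm)
    (hX : LieXMod K M N d act) (n : N) (m p : M) :
    tm n ⁅m, p⁆ = tm (d m) (act n p) - tm (d p) (act n m) := by
  have h := hTM.tmul_lie_right n m p
  rw [hTM.rel3a, hTM.rel3a, hX.peiffer, hX.peiffer, ← lie_skew m p, map_neg] at h
  rw [← lie_skew m p, map_neg]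
  linear_combination (norm := module) -h

theorem tmul_lie_boundary (hTM : IsNATensor K N M act (coAct K M N d) TM tm)
    (hX : LieXMod K M N d act) (n : N) (m m' : M) :
    tm ⁅n, d m⁆ m' = - tm (d m') (act n m) := by
  rw [hTM.rel3a, hX.peiffer, hTM.tmul_lie_eq_sub hX]
  abel

theorem lie_eq_tmul_boundary (hTM : IsNATensor K N M act (coAct K M N d) TM tm)
    (hX : LieXMod K M N d act) {ν : TM →ₗ[K] M} (hν : ∀ n m, ν (tm n m) = act n m)
    (u v : TM) : ⁅u, v⁆ = tm (d (ν u)) (ν v) := by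
  have : bracketMap K TM = (tm ∘ₗ d.toLinearMap ∘ₗ ν).compl₂ ν :=
    hTM.linearMap_ext₂ hTM fun n m n' m' => by
      simp [hTM.rel4, hν, hX.equivar, ← lie_skew n (d m), -lie_skew]
  exact LinearMap.congr_fun₂ this u v

theorem tmul_boundary_comm (hTM : IsNATensor K N M act (coAct K M N d) TM tm)
    (hX : LieXMod K M N d act) {ν : TM →ₗ[K] M} (hν : ∀ n m, ν (tm n m) = act n m)
    (u : TM) (m : M) : tm (d (ν u)) m = - tm (d m) (ν u) := by
  have : tm.flip m ∘ₗ d.toLinearMap ∘ₗ ν = -(tm (d m) ∘ₗ ν) :=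
    hTM.linearMap_ext fun n m' => by simp [hν, hX.equivar, hTM.tmul_lie_boundary hX]
  exact LinearMap.congr_fun this u

end IsNATensor

variable {A : TN →ₗ[K] TM →ₗ[K] TM}

theorem IsNATensor.act_eq_tmul (hTM : IsNATensor K N M act (coAct K M N d) TM tm)
    (hTN : IsNATensorSq K N TN tn)
    (hA : ∀ n₁ n₂ n₃ m, A (tn n₁ n₂) (tm n₃ m) = tm ⁅⁅n₁, n₂⁆, n₃⁆ m + tm n₃ (act ⁅n₁, n₂⁆ m))
    {κ : TN →ₗ[K] N} (hκ : ∀ a b, κ (tn a b) = ⁅a, b⁆) {ν : TM →ₗ[K] M}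
    (hν : ∀ n m, ν (tm n m) = act n m) (x : TN) (u : TM) : A x u = tm (κ x) (ν u) := by
  have : A = (tm ∘ₗ κ).compl₂ ν :=
    IsNATensor.linearMap_ext₂ hTN hTM fun a b n m => by
      simp only [LinearMap.compl₂_apply, LinearMap.comp_apply, hA, hκ, hν, hTM.rel3a ⁅a, b⁆ n m,
        sub_add_cancel]
  exact LinearMap.congr_fun₂ this x u

theorem LieBraiding.tensor {br : N →ₗ[K] N →ₗ[K] M} (hB : LieBraiding K M N d act br)
    (hX : LieXMod K M N d act) (hTM : IsNATensor K N M act (coAct K M N d) TM tm)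
    (hTN : IsNATensorSq K N TN tn) {D : TM →ₗ⁅K⁆ TN} (hD : ∀ n m, D (tm n m) = tn n (d m))
    (hA : ∀ n₁ n₂ n₃ m, A (tn n₁ n₂) (tm n₃ m) = tm ⁅⁅n₁, n₂⁆, n₃⁆ m + tm n₃ (act ⁅n₁, n₂⁆ m))
    {β : TN →ₗ⁅K⁆ M} (hβ : ∀ a b, β (tn a b) = br a b) :
    LieBraiding K TM TN D A ((tm ∘ₗ d.toLinearMap ∘ₗ β.toLinearMap).compl₂ β.toLinearMap) := by
  have hκ : ∀ a b, (d.toLinearMap ∘ₗ β.toLinearMap) (tn a b) = ⁅a, b⁆ := fun a b => by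
    simp [hβ, hB.b1]
  have hν : ∀ n m, (β.toLinearMap ∘ₗ D.toLinearMap) (tm n m) = act n m := fun n m => by
    simp [hD, hβ, hB.b4]
  have hlieTN := hTN.lie_eq_tmul hκ
  have hlieTM := hTM.lie_eq_tmul_boundary hX hν
  have hcomm := hTM.tmul_boundary_comm hX hν
  have hA' := hTM.act_eq_tmul hTN hA hκ hν
  simp only [LinearMap.comp_apply, LieHom.coe_toLinearMap] at hlieTN hlieTM hcomm hA'
  refine ⟨fun x y => ?_, fun u v => ?_, fun u y => ?_, fun x v => ?_, fun x y z => ?_,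
    fun x y z => ?_⟩ <;>
    simp only [LinearMap.compl₂_apply, LinearMap.comp_apply, LieHom.coe_toLinearMap,
      LieHom.map_lie]
  · rw [hD, hlieTN]
  · rw [hlieTM]
  · rw [hA', hcomm]
  · rw [hA']
  · exact hTM.tmul_lie_right _ _ _
  · exact hTM.tmul_lie_boundary_boundary hX _ _ _

end CrossedModule

theorem braiding_on_universal_extension (K : Type u) [CommRing K] (M N : Type u) [LieRing M] [LieAlgebra K M]
    [LieRing N] [LieAlgebra K N] (d : M →ₗ⁅K⁆ N) (act : N →ₗ[K] M →ₗ[K] M)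
    (br : N →ₗ[K] N →ₗ[K] M) (hX : LieXMod K M N d act)
    (hB : LieBraiding K M N d act br)
    (TM : Type u) [LieRing TM] [LieAlgebra K TM] (tm : N →ₗ[K] M →ₗ[K] TM)
    (hTM : IsNATensor K N M act (coAct K M N d) TM tm)
    (TN : Type u) [LieRing TN] [LieAlgebra K TN] (tn : N →ₗ[K] N →ₗ[K] TN)
    (hTN : IsNATensorSq K N TN tn)
    (D : TM →ₗ⁅K⁆ TN) (hD : ∀ (n : N) (m : M), D (tm n m) = tn n (d m))
    (A : TN →ₗ[K] TM →ₗ[K] TM)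
    (hA : ∀ (n₁ n₂ n₃ : N) (m : M),
      A (tn n₁ n₂) (tm n₃ m) = tm ⁅⁅n₁, n₂⁆, n₃⁆ m + tm n₃ (act ⁅n₁, n₂⁆ m)) :
    ∃ Br : TN →ₗ[K] TN →ₗ[K] TM,
      (∀ n₁ n₂ n₃ n₄ : N,
        Br (tn n₁ n₂) (tn n₃ n₄) = tm ⁅n₁, n₂⁆ (br n₃ n₄)) ∧
      LieBraiding K TM TN D A Br := by
  obtain ⟨β, hβ⟩ := hB.exists_lieHom_tensorSq hX hTN
  refine ⟨(tm ∘ₗ d.toLinearMap ∘ₗ β.toLinearMap).compl₂ β.toLinearMap, fun n₁ n₂ n₃ n₄ => ?_,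
    hB.tensor hX hTM hTN hD hA hβ⟩
  simp [hβ, hB.b1]
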